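/- arXiv:1907.07399 — 7 statements merged into one kernel-verified Lean document; each statement's English description precedes it below -/
import Mathlib

section
/- Let H be a real Hilbert space, K : H → H a bounded self-adjoint linear operator with 0 ≤ ⟪K v, v⟫ ≤ c ⟪v, v⟫ for all v ∈ H for a constant c ∈ [0,1), and set a(u,v) := ⟪u, v⟫ − ⟪K u, v⟫. Let ℓ : H → ℝ be a continuous linear functional and let u ∈ H be the unique element with a(u, v) = ℓ(v) for all v ∈ H. Given u⁰ ∈ H, let u^{1/2} ∈ H be the unique element satisfying ⟪u^{1/2}, v⟫ = ⟪K u⁰, v⟫ + ℓ(v) for all v ∈ H. Then the half-step error e^{1/2} := u − u^{1/2} satisfies e^{1/2} = K(u − u⁰) and a(e^{1/2}, e^{1/2}) ≤ c² · a(u − u⁰, u − u⁰). -/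
open scoped RealInnerProductSpace

/-- The even-parity bilinear form `a(u,v) = ⟪u,v⟫ - ⟪Ku,v⟫`. -/
noncomputable def aForm {H : Type*} [NormedAddCommGroup H] [InnerProductSpace ℝ H]
    (K : H →L[ℝ] H) (u v : H) : ℝ := ⟪u, v⟫ - ⟪K u, v⟫

/-- Scalar core inequality. -/
lemma stmt4_scal (c N s t b : ℝ) (hc0 : 0 ≤ c) (hc1 : c < 1)
    (hN : 0 ≤ N) (hs : 0 ≤ s) (ht : 0 ≤ t) (hb : 0 ≤ b)
    (h1 : b ≤ c * t) (h2 : t * t ≤ s * b) (h3 : s ≤ c * N) (h4 : s * s ≤ t * N) :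
    t - b ≤ c ^ 2 * (N - s) := by
  rcases eq_or_lt_of_le ht with h | htpos
  · have hb0 : b = 0 := le_antisymm (by nlinarith) hb
    have : s ≤ N := h3.trans (by nlinarith)
    nlinarith [sq_nonneg c]
  · have hts : t ≤ c * s := by
      have : t * t ≤ c * s * t := by nlinarith
      exact le_of_mul_le_mul_right (by linarith) htpos
    have hspos : 0 < s := by nlinarith
    have hA : 0 ≤ (s - t) * (c * s - t) * (t + c * s) := by
      apply mul_nonneg (mul_nonneg _ _) (by nlinarith) <;> nlinarith
    have hB : 0 ≤ c ^ 2 * s * (t * N - s * s) := by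
      apply mul_nonneg (by positivity); linarith
    nlinarith [mul_pos hspos htpos, mul_le_mul_of_nonneg_left h2 ht]

/-- Cauchy–Schwarz for the semi-inner-product `(x,y) ↦ ⟪Kx,y⟫`. -/
lemma stmt4_cs {H : Type*} [NormedAddCommGroup H] [InnerProductSpace ℝ H]
    (K : H →L[ℝ] H) (hK : ∀ u v : H, ⟪K u, v⟫ = ⟪u, K v⟫)
    (hKpos : ∀ v : H, 0 ≤ ⟪K v, v⟫) (x y : H) :
    ⟪K x, y⟫ * ⟪K x, y⟫ ≤ ⟪K x, x⟫ * ⟪K y, y⟫ := by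
  set a : ℝ := ⟪K x, x⟫ with ha
  set d : ℝ := ⟪K y, y⟫ with hd
  set p : ℝ := ⟪K x, y⟫ with hp
  have hsymm : ⟪K y, x⟫ = p := by rw [hK y x, real_inner_comm]
  have ha0 : 0 ≤ a := hKpos x
  have hd0 : 0 ≤ d := hKpos y
  have expand : ∀ r q : H, ⟪K (r - q), r - q⟫
      = ⟪K r, r⟫ - ⟪K r, q⟫ - ⟪K q, r⟫ + ⟪K q, q⟫ := by
    intro r q
    rw [map_sub, inner_sub_left, inner_sub_right, inner_sub_right]; ring
  have h1 : 0 ≤ d * d * a - d * (p * p) := by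
    have := hKpos (d • x - p • y)
    rw [expand] at this
    simp only [map_smul, inner_smul_left, inner_smul_right, RCLike.ofReal_real_eq_id, id_eq,
      conj_trivial] at this
    rw [hsymm] at this
    nlinarith [this]
  have h2 : 0 ≤ a * a * d - a * (p * p) := by
    have := hKpos (a • y - p • x)
    rw [expand] at this
    simp only [map_smul, inner_smul_left, inner_smul_right, RCLike.ofReal_real_eq_id, id_eq,
      conj_trivial] at this
    rw [hsymm] at this
    nlinarith [this]
  have h3 : 0 ≤ a + p + p + d := by
    have := hKpos (x + y)
    rw [map_add, inner_add_left, inner_add_right, inner_add_right] at this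
    rw [hsymm] at this; linarith
  have h4 : 0 ≤ a - p - p + d := by
    have := hKpos (x - y)
    rw [expand] at this
    rw [hsymm] at this; linarith
  rcases eq_or_lt_of_le (by linarith : (0:ℝ) ≤ a + d) with hz | hpos
  · have haz : a = 0 := by linarith
    have hdz : d = 0 := by linarith
    have : p = 0 := by nlinarith
    simp [haz, hdz, this]
  · have : (a + d) * (p * p) ≤ (a + d) * (a * d) := by nlinarith
    exact le_of_mul_le_mul_left this hpos

/-- the source-iteration half step contracts the error in the energy norm. -/
theorem stmt_4 {H : Type*} [NormedAddCommGroup H] [InnerProductSpace ℝ H] [CompleteSpace H]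
    (K : H →L[ℝ] H) (hK : ∀ u v : H, ⟪K u, v⟫ = ⟪u, K v⟫)
    (c : ℝ) (hc0 : 0 ≤ c) (hc1 : c < 1)
    (hKpos : ∀ v : H, 0 ≤ ⟪K v, v⟫)
    (hKbd : ∀ v : H, ⟪K v, v⟫ ≤ c * ⟪v, v⟫)
    (ℓ : H →L[ℝ] ℝ)
    (u : H) (hu : ∀ v : H, aForm K u v = ℓ v)
    (u0 uhalf : H) (huhalf : ∀ v : H, ⟪uhalf, v⟫ = ⟪K u0, v⟫ + ℓ v) :
    u - uhalf = K (u - u0) ∧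
    aForm K (u - uhalf) (u - uhalf) ≤ c ^ 2 * aForm K (u - u0) (u - u0) := by
  set e : H := u - u0 with he
  have heq : u - uhalf = K e := by
    apply ext_inner_right ℝ
    intro v
    have h1 := hu v
    have h2 := huhalf v
    unfold aForm at h1
    rw [inner_sub_left, he, map_sub, inner_sub_left]
    linarith
  refine ⟨heq, ?_⟩
  rw [heq]
  unfold aForm
  exact stmt4_scal c ⟪e, e⟫ ⟪K e, e⟫ ⟪K e, K e⟫ ⟪K (K e), K e⟫ hc0 hc1
    real_inner_self_nonneg (hKpos e) real_inner_self_nonneg (hKpos (K e))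
    (hKbd (K e)) (stmt4_cs K hK hKpos e (K e)) (hKbd e)
    (real_inner_mul_inner_self_le (K e) e)
end

section
/- Let H be a real Hilbert space, K : H → H a bounded self-adjoint linear operator with 0 ≤ ⟪K v, v⟫ ≤ c ⟪v, v⟫ for all v ∈ H for a constant c ∈ [0,1), and set a(u,v) := ⟪u, v⟫ − ⟪K u, v⟫. Let ℓ : H → ℝ be a continuous linear functional, u ∈ H the unique element with a(u, v) = ℓ(v) for all v ∈ H, and W₁ ⊆ H a closed subspace. Given u⁰ ∈ H, define: u^{1/2} ∈ H as the unique element with ⟪u^{1/2}, v⟫ = ⟪K u⁰, v⟫ + ℓ(v) for all v ∈ H; u_D ∈ W₁ as the unique element with a(u_D, v) = ⟪K(u^{1/2} − u⁰), v⟫ for all v ∈ W₁; and u¹ := u^{1/2} + u_D. Then a(u − u¹, u − u¹) ≤ c² · a(u − u⁰, u − u⁰). -/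
open scoped RealInnerProductSpace

/-- one step of the DSA-preconditioned source iteration contracts the error
in the energy norm with rate c. -/
theorem stmt_6 {H : Type*} [NormedAddCommGroup H] [InnerProductSpace ℝ H] [CompleteSpace H]
    (K : H →L[ℝ] H) (hK : ∀ u v : H, ⟪K u, v⟫ = ⟪u, K v⟫)
    (c : ℝ) (hc0 : 0 ≤ c) (hc1 : c < 1)
    (hKpos : ∀ v : H, 0 ≤ ⟪K v, v⟫)
    (hKbd : ∀ v : H, ⟪K v, v⟫ ≤ c * ⟪v, v⟫)
    (ℓ : H →L[ℝ] ℝ)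
    (u : H) (hu : ∀ v : H, aForm K u v = ℓ v)
    (W₁ : Submodule ℝ H) (hW₁ : IsClosed (W₁ : Set H))
    (u0 uhalf uD u1 : H)
    (huhalf : ∀ v : H, ⟪uhalf, v⟫ = ⟪K u0, v⟫ + ℓ v)
    (huD : uD ∈ W₁) (huDeq : ∀ v ∈ W₁, aForm K uD v = ⟪K (uhalf - u0), v⟫)
    (hu1 : u1 = uhalf + uD) :
    aForm K (u - u1) (u - u1) ≤ c ^ 2 * aForm K (u - u0) (u - u0) := by
  have hKsymm : ∀ x y : H, ⟪K x, y⟫ = ⟪K y, x⟫ := by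
    intro x y; rw [hK, real_inner_comm]
  have hsymm : ∀ x y : H, aForm K x y = aForm K y x := by
    intro x y; simp only [aForm, real_inner_comm x y, hKsymm x y]
  set e0 : H := u - u0 with he0
  set eh : H := u - uhalf with heh
  have heK : eh = K e0 := by
    have key : ∀ v : H, ⟪eh - K e0, v⟫ = 0 := by
      intro v
      have h1 := hu v
      simp only [aForm] at h1
      have h2 := huhalf v
      have e1 : ⟪eh - K e0, v⟫ = ⟪u, v⟫ - ⟪uhalf, v⟫ - (⟪K u, v⟫ - ⟪K u0, v⟫) := by
        simp only [heh, he0, inner_sub_left, map_sub]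
      rw [e1]; linarith
    have hz := key (eh - K e0)
    exact sub_eq_zero.mp (inner_self_eq_zero.mp hz)
  have hproj : ∀ v ∈ W₁, aForm K eh v = aForm K uD v := by
    intro v hv
    have h3 := huDeq v hv
    have hdiff : uhalf - u0 = e0 - eh := by rw [he0, heh]; abel
    rw [h3, hdiff, heK]
    simp only [aForm, map_sub, inner_sub_left]
  have hprojD := hproj uD huD
  have hexp : aForm K (eh - uD) (eh - uD)
      = aForm K eh eh - aForm K eh uD - aForm K uD eh + aForm K uD uD := by
    simp only [aForm, inner_sub_left, inner_sub_right, map_sub]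
    ring
  have haDpos : 0 ≤ aForm K uD uD := by
    have h1 := hKbd uD
    have h2 : (0:ℝ) ≤ ⟪uD, uD⟫ := real_inner_self_nonneg
    simp only [aForm]
    nlinarith
  have hu1' : u - u1 = eh - uD := by rw [hu1, heh]; abel
  have step1 : aForm K (u - u1) (u - u1) ≤ aForm K eh eh := by
    rw [hu1', hexp, hsymm uD eh, hprojD]
    linarith
  set p : ℝ := ⟪e0, e0⟫ with hp
  set q : ℝ := ⟪K e0, e0⟫ with hq
  set r : ℝ := ⟪K e0, K e0⟫ with hr
  set s : ℝ := ⟪K (K e0), K e0⟫ with hs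
  have hp0 : 0 ≤ p := real_inner_self_nonneg
  have hq0 : 0 ≤ q := hKpos e0
  have hs0 : 0 ≤ s := hKpos (K e0)
  have hr0 : 0 ≤ r := real_inner_self_nonneg
  have hqcp : q ≤ c * p := hKbd e0
  have hscr : s ≤ c * r := hKbd (K e0)
  have hcs1 : r ^ 2 ≤ q * s := by
    have hform : ∀ t : ℝ, 0 ≤ s * (t * t) + (2 * r) * t + q := by
      intro t
      have h := hKpos (e0 + t • K e0)
      have h1 : ⟪K (K e0), e0⟫ = r := by rw [hK]
      have hx : ⟪K (e0 + t • K e0), e0 + t • K e0⟫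
          = s * (t * t) + (2 * r) * t + q := by
        simp only [map_add, map_smul, inner_add_left, inner_add_right,
          real_inner_smul_left, real_inner_smul_right, h1]
        rw [← hs, ← hr, ← hq]
        ring
      rw [hx] at h
      exact h
    have hd := discrim_le_zero hform
    simp only [discrim] at hd
    nlinarith
  have hcs2 : q ^ 2 ≤ r * p := by
    have h := real_inner_mul_inner_self_le (K e0) e0
    rw [← hq, ← hr, ← hp] at h
    nlinarith
  have hrcq : r ≤ c * q := by
    rcases eq_or_lt_of_le hr0 with h | h
    · rw [← h]; positivity
    · nlinarith [mul_le_mul_of_nonneg_left hscr hq0]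
  have hscalar : r - s ≤ c ^ 2 * (p - q) := by
    rcases eq_or_lt_of_le hr0 with h | h
    · have hcp : c * p ≤ 1 * p := mul_le_mul_of_nonneg_right hc1.le hp0
      have hqp : q ≤ p := by linarith
      have hnn : 0 ≤ c ^ 2 * (p - q) := mul_nonneg (sq_nonneg c) (by linarith)
      linarith
    · have hcq : 0 < c * q := h.trans_le hrcq
      have hqpos : 0 < q := by
        by_contra hq'
        push_neg at hq'
        have : c * q ≤ 0 := mul_nonpos_of_nonneg_of_nonpos hc0 hq'
        linarith
      have hcq1 : c * q ≤ 1 * q := mul_le_mul_of_nonneg_right hc1.le hq0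
      have hqr : r ≤ q := by linarith
      have t1 : 0 ≤ ((q - r) * (c * q - r)) * (c * q + r) :=
        mul_nonneg (mul_nonneg (sub_nonneg.2 hqr) (sub_nonneg.2 hrcq))
          (add_nonneg (mul_nonneg hc0 hq0) hr0)
      have t2 : 0 ≤ c ^ 2 * q * (r * p - q ^ 2) :=
        mul_nonneg (mul_nonneg (sq_nonneg c) hq0) (sub_nonneg.2 hcs2)
      have t3 : 0 ≤ r * (q * s - r ^ 2) :=
        mul_nonneg hr0 (sub_nonneg.2 hcs1)
      have hid : q * r * (c ^ 2 * (p - q) - (r - s))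
          = ((q - r) * (c * q - r)) * (c * q + r) + c ^ 2 * q * (r * p - q ^ 2)
            + r * (q * s - r ^ 2) := by ring
      have key : 0 ≤ q * r * (c ^ 2 * (p - q) - (r - s)) := by
        rw [hid]; linarith
      have h4 : 0 < q * r := mul_pos hqpos h
      by_contra hcon
      push_neg at hcon
      have h5 : 0 < (r - s) - c ^ 2 * (p - q) := by linarith
      have h6 : 0 < q * r * ((r - s) - c ^ 2 * (p - q)) := mul_pos h4 h5
      have h7 : q * r * ((r - s) - c ^ 2 * (p - q))
          = -(q * r * (c ^ 2 * (p - q) - (r - s))) := by ring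
      rw [h7] at h6
      linarith
  have hEh : aForm K eh eh = r - s := by
    rw [heK]; simp only [aForm, ← hr, ← hs]
  have hE0 : aForm K e0 e0 = p - q := by
    simp only [aForm, ← hp, ← hq]
  calc aForm K (u - u1) (u - u1) ≤ aForm K eh eh := step1
    _ = r - s := hEh
    _ ≤ c ^ 2 * (p - q) := hscalar
    _ = c ^ 2 * aForm K e0 e0 := by rw [hE0]
end

section
/- Let H be a real Hilbert space, K : H → H a bounded self-adjoint linear operator with 0 ≤ ⟪K v, v⟫ ≤ c ⟪v, v⟫ for all v ∈ H for a constant c ∈ [0,1), and set a(u,v) := ⟪u, v⟫ − ⟪K u, v⟫. Let ℓ : H → ℝ be a continuous linear functional, u ∈ H the unique element with a(u, v) = ℓ(v) for all v ∈ H, and W₁ ⊆ H a closed subspace. Let (u^k)_{k≥0} be any sequence in H such that for every k there exist u^{k+1/2} ∈ H and u_D^k ∈ W₁ with ⟪u^{k+1/2}, v⟫ = ⟪K u^k, v⟫ + ℓ(v) for all v ∈ H, a(u_D^k, v) = ⟪K(u^{k+1/2} − u^k), v⟫ for all v ∈ W₁, and u^{k+1} = u^{k+1/2} + u_D^k. Then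 for all k ≥ 0, a(u − u^k, u − u^k) ≤ c^{2k} · a(u − u⁰, u − u⁰); in particular the iteration converges linearly to u with contraction rate c in the energy norm ‖·‖_a = a(·,·)^{1/2}. -/
open scoped RealInnerProductSpace

/-- Cauchy–Schwarz for an abstract nonneg symmetric bilinear form. -/
lemma cs_aux {H : Type*} [AddCommGroup H] [Module ℝ H] (B : H → H → ℝ)
    (hsym : ∀ u v, B u v = B v u)
    (haddl : ∀ u v w, B (u + v) w = B u w + B v w)
    (hsmull : ∀ (t : ℝ) u v, B (t • u) v = t * B u v)
    (hpos : ∀ v, 0 ≤ B v v) : ∀ u v, B u v ^ 2 ≤ B u u * B v v := by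
  intro u v
  have haddr : ∀ u v w, B u (v + w) = B u v + B u w := by
    intro a b c; rw [hsym, haddl, hsym b a, hsym c a]
  have hsmulr : ∀ (t : ℝ) u v, B u (t • v) = t * B u v := by
    intro t a b; rw [hsym, hsmull, hsym b a]
  have h : ∀ x : ℝ, 0 ≤ B v v * (x * x) + 2 * B u v * x + B u u := by
    intro x
    have e : B (u + x • v) (u + x • v)
        = B v v * (x * x) + 2 * B u v * x + B u u := by
      rw [haddl, hsmull, haddr, haddr, hsmulr, hsmulr, hsym v u]
      ring
    have := hpos (u + x • v)
    linarith [e ▸ this]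
  have hd := discrim_le_zero h
  rw [discrim] at hd
  nlinarith [hd]

section main

variable {H : Type*} [NormedAddCommGroup H] [InnerProductSpace ℝ H]
  (K : H →L[ℝ] H)

lemma aForm_symm (hK : ∀ u v : H, ⟪K u, v⟫ = ⟪u, K v⟫) (u v : H) :
    aForm K u v = aForm K v u := by
  unfold aForm
  rw [real_inner_comm u v, hK, real_inner_comm u (K v)]

lemma aForm_addl (u v w : H) : aForm K (u + v) w = aForm K u w + aForm K v w := by
  unfold aForm; rw [inner_add_left, map_add, inner_add_left]; ring

lemma aForm_smull (t : ℝ) (u v : H) : aForm K (t • u) v = t * aForm K u v := by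
  unfold aForm; rw [inner_smul_left, map_smul, inner_smul_left]; simp; ring

lemma aForm_subl (u v w : H) : aForm K (u - v) w = aForm K u w - aForm K v w := by
  unfold aForm; rw [inner_sub_left, map_sub, inner_sub_left]; ring

variable {c : ℝ} (hc0 : 0 ≤ c) (hc1 : c < 1)
  (hK : ∀ u v : H, ⟪K u, v⟫ = ⟪u, K v⟫)
  (hKpos : ∀ v : H, 0 ≤ ⟪K v, v⟫)
  (hKbd : ∀ v : H, ⟪K v, v⟫ ≤ c * ⟪v, v⟫)

set_option linter.unusedSectionVars false

include hc0 hc1 hK hKpos hKbd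

lemma aForm_nonneg (v : H) : 0 ≤ aForm K v v := by
  have := hKbd v
  have := real_inner_self_nonneg (x := v)
  unfold aForm; nlinarith

/-- `‖Kv‖² ≤ c⟪Kv,v⟫` : the operator inequality K² ≤ cK. -/
lemma K_sq_le (v : H) : ⟪K v, K v⟫ ≤ c * ⟪K v, v⟫ := by
  have hcs := cs_aux (fun u w => ⟪K u, w⟫)
    (fun a b => by show ⟪K a, b⟫ = ⟪K b, a⟫; rw [hK a b]; exact (real_inner_comm a (K b)).symm)
    (fun a b w => by show ⟪K (a + b), w⟫ = ⟪K a, w⟫ + ⟪K b, w⟫; rw [map_add, inner_add_left])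
    (fun t a w => by show ⟪K (t • a), w⟫ = t * ⟪K a, w⟫; rw [map_smul, inner_smul_left]; norm_num)
    hKpos v (K v)
  have h1 : ⟪K (K v), K v⟫ ≤ c * ⟪K v, K v⟫ := hKbd (K v)
  have h2 : (0:ℝ) ≤ ⟪K v, K v⟫ := real_inner_self_nonneg
  have h3 : (0:ℝ) ≤ ⟪K v, v⟫ := hKpos v
  -- hcs : ⟪K v, K v⟫ ^ 2 ≤ ⟪K v, v⟫ * ⟪K (K v), K v⟫
  nlinarith [hcs, mul_le_mul_of_nonneg_left h1 h3, mul_nonneg hc0 h3, h2]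

/-- `0 ≤ a(Kv, v)` : positivity of K w.r.t. the a-form. -/
lemma aForm_K_nonneg (v : H) : 0 ≤ aForm K (K v) v := by
  have h1 := K_sq_le K hc0 hc1 hK hKpos hKbd v
  have h3 := hKpos v
  unfold aForm
  rw [hK (K v) v]
  nlinarith []

/-- `a(Kv, v) ≤ c a(v,v)` : boundedness of K w.r.t. the a-form. -/
lemma aForm_K_bd (v : H) : aForm K (K v) v ≤ c * aForm K v v := by
  have hx : ⟪K v, v⟫ ≤ c * ⟪v, v⟫ := hKbd v
  have hs : (0:ℝ) ≤ ⟪v, v⟫ := real_inner_self_nonneg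
  have hx0 : (0:ℝ) ≤ ⟪K v, v⟫ := hKpos v
  have ht0 : (0:ℝ) ≤ ⟪K v, K v⟫ := real_inner_self_nonneg
  have hcs : ⟪K v, v⟫ ^ 2 ≤ ⟪K v, K v⟫ * ⟪v, v⟫ := by
    have h0 := abs_real_inner_le_norm (K v) v
    have h1 : ⟪K v, v⟫ ^ 2 ≤ (‖K v‖ * ‖v‖) ^ 2 := by
      rw [← sq_abs]
      exact pow_le_pow_left₀ (abs_nonneg _) h0 2
    calc ⟪K v, v⟫ ^ 2 ≤ (‖K v‖ * ‖v‖) ^ 2 := h1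
      _ = ⟪K v, K v⟫ * ⟪v, v⟫ := by
        rw [real_inner_self_eq_norm_sq, real_inner_self_eq_norm_sq]; ring
  have hss : c * ⟪v, v⟫ ≤ ⟪v, v⟫ := by nlinarith
  have hkey : 0 ≤ (⟪v, v⟫ - ⟪K v, v⟫) * (c * ⟪v, v⟫ - ⟪K v, v⟫) :=
    mul_nonneg (sub_nonneg.2 (hx.trans hss)) (sub_nonneg.2 hx)
  unfold aForm
  rw [hK (K v) v]
  -- goal: ⟪K v, v⟫ - ⟪K v, K v⟫ ≤ c * (⟪v,v⟫ - ⟪K v, v⟫)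
  rcases eq_or_lt_of_le hs with hz | hz
  · have hxz : ⟪K v, v⟫ = 0 := le_antisymm (by nlinarith) hx0
    rw [hxz]
    nlinarith
  · nlinarith [hcs, hkey, hz, mul_pos hz hz]

/-- Key contraction: `a(Kv,Kv) ≤ c² a(v,v)`. -/
lemma aForm_contract (v : H) : aForm K (K v) (K v) ≤ c ^ 2 * aForm K v v := by
  have hsymm := aForm_symm K hK
  have haK_symm : ∀ u w : H, aForm K (K u) w = aForm K (K w) u := by
    intro a b
    unfold aForm
    rw [hK a b, hK (K a) b, real_inner_comm (K b) a, hK (K b) a,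
      real_inner_comm (K b) (K a)]
  have hcs := cs_aux (fun a b => aForm K (K a) b)
    (fun a b => by show aForm K (K a) b = aForm K (K b) a; exact haK_symm a b)
    (fun a b w => by
      show aForm K (K (a + b)) w = aForm K (K a) w + aForm K (K b) w
      rw [map_add]; exact aForm_addl K _ _ _)
    (fun t a w => by
      show aForm K (K (t • a)) w = t * aForm K (K a) w
      rw [map_smul]; exact aForm_smull K _ _ _)
    (fun w => aForm_K_nonneg K hc0 hc1 hK hKpos hKbd w)
    v (K v)
  -- hcs : (aForm K (K v) (K v)) ^ 2 ≤ aForm K (K v) v * aForm K (K (K v)) (K v)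
  have h1 : aForm K (K (K v)) (K v) ≤ c * aForm K (K v) (K v) :=
    aForm_K_bd K hc0 hc1 hK hKpos hKbd (K v)
  have h2 : aForm K (K v) v ≤ c * aForm K v v := aForm_K_bd K hc0 hc1 hK hKpos hKbd v
  have h3 : 0 ≤ aForm K (K v) (K v) := aForm_nonneg K hc0 hc1 hK hKpos hKbd (K v)
  have h4 : 0 ≤ aForm K (K v) v := aForm_K_nonneg K hc0 hc1 hK hKpos hKbd v
  have h5 : 0 ≤ aForm K v v := aForm_nonneg K hc0 hc1 hK hKpos hKbd v
  rcases eq_or_lt_of_le h3 with h | h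
  · nlinarith [mul_nonneg (sq_nonneg c) h5]
  · have hA : aForm K (K v) (K v) ^ 2 ≤ (c * aForm K (K v) v) * aForm K (K v) (K v) := by
      nlinarith [mul_le_mul_of_nonneg_left h1 h4]
    have hle : aForm K (K v) (K v) ≤ c * aForm K (K v) v := by
      nlinarith [hA, h]
    calc aForm K (K v) (K v) ≤ c * aForm K (K v) v := hle
      _ ≤ c * (c * aForm K v v) := mul_le_mul_of_nonneg_left h2 hc0
      _ = c ^ 2 * aForm K v v := by ring

end main

/-- linear convergence of the DSA-preconditioned source iteration with
contraction rate c in the energy norm. -/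
theorem stmt_7 {H : Type*} [NormedAddCommGroup H] [InnerProductSpace ℝ H] [CompleteSpace H]
    (K : H →L[ℝ] H) (hK : ∀ u v : H, ⟪K u, v⟫ = ⟪u, K v⟫)
    (c : ℝ) (hc0 : 0 ≤ c) (hc1 : c < 1)
    (hKpos : ∀ v : H, 0 ≤ ⟪K v, v⟫)
    (hKbd : ∀ v : H, ⟪K v, v⟫ ≤ c * ⟪v, v⟫)
    (ℓ : H →L[ℝ] ℝ)
    (u : H) (hu : ∀ v : H, aForm K u v = ℓ v)
    (W₁ : Submodule ℝ H) (hW₁ : IsClosed (W₁ : Set H))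
    (uk : ℕ → H)
    (hiter : ∀ k : ℕ, ∃ uhalf uD : H, uD ∈ W₁ ∧
      (∀ v : H, ⟪uhalf, v⟫ = ⟪K (uk k), v⟫ + ℓ v) ∧
      (∀ v ∈ W₁, aForm K uD v = ⟪K (uhalf - uk k), v⟫) ∧
      uk (k + 1) = uhalf + uD) :
    ∀ k : ℕ, aForm K (u - uk k) (u - uk k) ≤ c ^ (2 * k) * aForm K (u - uk 0) (u - uk 0) := by
  have hsymm := aForm_symm K hK
  have hsub := aForm_subl K
  have hsubr : ∀ a b d : H, aForm K a (b - d) = aForm K a b - aForm K a d := by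
    intro a b d; rw [hsymm, hsub, hsymm b a, hsymm d a]
  -- one-step contraction
  have step : ∀ k : ℕ, aForm K (u - uk (k + 1)) (u - uk (k + 1))
      ≤ c ^ 2 * aForm K (u - uk k) (u - uk k) := by
    intro k
    obtain ⟨uhalf, uD, huD, hhalf, hD, hnext⟩ := hiter k
    obtain ⟨e, he⟩ : ∃ e : H, e = u - uk k := ⟨_, rfl⟩
    -- u - uhalf = K e
    have hhalf' : u - uhalf = K e := by
      have h0 : ∀ v : H, ⟪u - uhalf - K e, v⟫ = 0 := by
        intro v
        have h1 := hhalf v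
        have h2 := hu v
        unfold aForm at h2
        have hKe : (K e : H) = K u - K (uk k) := by rw [he, map_sub]
        rw [inner_sub_left, inner_sub_left, h1, hKe, inner_sub_left]
        linarith
      have h4 := h0 (u - uhalf - K e)
      rw [inner_self_eq_zero] at h4
      exact sub_eq_zero.mp (by rw [sub_eq_zero] at h4 ⊢; exact h4)
    -- new error
    have herr : u - uk (k + 1) = K e - uD := by
      rw [hnext]
      have : u - (uhalf + uD) = (u - uhalf) - uD := by abel
      rw [this, hhalf']
    -- uhalf - uk k = e - K e
    have hdiff : uhalf - uk k = e - K e := by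
      have h : uhalf = u - K e := by rw [← hhalf']; abel
      rw [h, he]; abel
    -- Galerkin orthogonality: a(K e, uD) = a(uD, uD)
    have hgal : aForm K (K e) uD = aForm K uD uD := by
      rw [hD uD huD, hdiff]
      show (⟪K e, uD⟫ - ⟪K (K e), uD⟫ : ℝ) = _
      rw [map_sub, inner_sub_left]
    have hgal' : aForm K uD (K e) = aForm K uD uD := by
      rw [hsymm]; exact hgal
    have hDpos : 0 ≤ aForm K uD uD := aForm_nonneg K hc0 hc1 hK hKpos hKbd uD
    have hexp : aForm K (u - uk (k+1)) (u - uk (k+1))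
        = aForm K (K e) (K e) - aForm K uD uD := by
      rw [herr, hsub, hsubr, hsubr, hgal, hgal']
      ring
    have hcontr := aForm_contract K hc0 hc1 hK hKpos hKbd e
    rw [hexp, ← he]
    linarith
  intro k
  induction k with
  | zero => simp
  | succ n ih =>
    have h1 := step n
    have h2 : 0 ≤ c ^ 2 := sq_nonneg c
    calc aForm K (u - uk (n + 1)) (u - uk (n + 1))
        ≤ c ^ 2 * aForm K (u - uk n) (u - uk n) := h1
      _ ≤ c ^ 2 * (c ^ (2 * n) * aForm K (u - uk 0) (u - uk 0)) :=
          mul_le_mul_of_nonneg_left ih h2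
      _ = c ^ (2 * (n + 1)) * aForm K (u - uk 0) (u - uk 0) := by
          rw [show 2 * (n + 1) = 2 + 2 * n by ring, pow_add]; ring
end

section
/- Let H be a real Hilbert space, K : H → H a bounded self-adjoint linear operator with 0 ≤ ⟪K v, v⟫ ≤ c ⟪v, v⟫ for all v ∈ H for a constant c ∈ [0,1), and set a(u,v) := ⟪u, v⟫ − ⟪K u, v⟫. Let ℓ : H → ℝ be a continuous linear functional, let W₁ ⊆ W ⊆ H be closed subspaces, and let u_W ∈ W be the unique element with a(u_W, v) = ℓ(v) for all v ∈ W. Let (u^k)_{k≥0} be any sequence in W such that for every k there exist u^{k+1/2} ∈ W and u_D^k ∈ W₁ with ⟪u^{k+1/2}, v⟫ = ⟪K u^k, v⟫ + ℓ(v) for all v ∈ W, a(u_D^k, v) = ⟪K(u^{k+1/2} − u^k), v⟫ for all v ∈ W₁, and u^{k+1} = u^{k+1/2} + u_D^k. Then a(u_W − u^{k+1}, u_W − u^{k+1}) ≤ c² · a(u_W − u^k, u_W − u^k) for every k; in particular a(u_W − u^k, u_W − u^k) ≤ c^{2k} · a(u_W − u⁰, u_W − u⁰). -/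
open scoped RealInnerProductSpace

/-- Cauchy–Schwarz for a symmetric nonnegative bilinear form. -/
lemma bilin_cs {H : Type*} [AddCommGroup H] [Module ℝ H]
    (B : H → H → ℝ)
    (hadd : ∀ u v w, B (u + v) w = B u w + B v w)
    (hsmul : ∀ (t : ℝ) u v, B (t • u) v = t * B u v)
    (hsymm : ∀ u v, B u v = B v u)
    (hpos : ∀ v, 0 ≤ B v v) (u v : H) : (B u v) ^ 2 ≤ B u u * B v v := by
  have h : ∀ t : ℝ, 0 ≤ B v v * (t * t) + (2 * B u v) * t + B u u := by
    intro t
    have h0 := hpos (u + t • v)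
    have hexp : B (u + t • v) (u + t • v)
        = B v v * (t * t) + (2 * B u v) * t + B u u := by
      rw [hadd, hsmul, hsymm u (u + t • v), hadd, hsmul, hsymm v (u + t • v), hadd, hsmul,
        hsymm v u]
      ring
    linarith [hexp ▸ h0]
  have hd := discrim_le_zero h
  rw [discrim] at hd
  nlinarith [hd]

/-- The purely numerical core of the one-step DSA contraction estimate. -/
lemma dsa_core (c B S T a1 : ℝ) (hc0 : 0 ≤ c) (hc1 : c < 1)
    (hBnn : 0 ≤ B) (hSnn : 0 ≤ S)
    (hTnn : 0 ≤ T) (hTle : T ≤ c * S) (hcsK : S ^ 2 ≤ B * T)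
    (hcs_a : (B - S) ^ 2 ≤ a1 * (S - T))
    (ha1nn : 0 ≤ a1) (ha2nn : 0 ≤ S - T) :
    S - T ≤ c ^ 2 * a1 := by
  have hSle : S ≤ c * B := by
    rcases eq_or_lt_of_le hSnn with hS0 | hSpos
    · rw [← hS0]; positivity
    · have hh : S * S ≤ (c * B) * S := by
        nlinarith [mul_le_mul_of_nonneg_left hTle hBnn]
      exact le_of_mul_le_mul_right hh hSpos
  have hBSnn : 0 ≤ B - S := by nlinarith
  rcases eq_or_lt_of_le hBnn with hB0 | hBpos
  · have hS0 : S = 0 := by nlinarith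
    nlinarith
  · have hb1 : B * (S - T) ≤ B * (c * (B - S)) := by
      nlinarith [mul_le_mul_of_nonneg_right hSle hBSnn]
    have hb2 : S - T ≤ c * (B - S) := le_of_mul_le_mul_left hb1 hBpos
    rcases eq_or_lt_of_le ha2nn with ha20 | ha2pos
    · rw [← ha20]; positivity
    · have h6 : (S - T) * (S - T) ≤ (c ^ 2 * a1) * (S - T) := by
        calc (S - T) * (S - T) = (S - T) ^ 2 := (sq (S - T)).symm
          _ ≤ (c * (B - S)) ^ 2 := pow_le_pow_left₀ (le_of_lt ha2pos) hb2 2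
          _ = c ^ 2 * (B - S) ^ 2 := by ring
          _ ≤ c ^ 2 * (a1 * (S - T)) := mul_le_mul_of_nonneg_left hcs_a (sq_nonneg c)
          _ = (c ^ 2 * a1) * (S - T) := by ring
      exact le_of_mul_le_mul_right h6 ha2pos

/-- One step of the DSA iteration contracts the error in the `a`-norm by `c²`. -/
lemma dsa_step {H : Type*} [NormedAddCommGroup H] [InnerProductSpace ℝ H]
    (K : H →L[ℝ] H) (hK : ∀ u v : H, ⟪K u, v⟫ = ⟪u, K v⟫)
    (c : ℝ) (hc0 : 0 ≤ c) (hc1 : c < 1)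
    (hKpos : ∀ v : H, 0 ≤ ⟪K v, v⟫)
    (hKbd : ∀ v : H, ⟪K v, v⟫ ≤ c * ⟪v, v⟫)
    (e et uD : H)
    (h1 : ⟪et, et⟫ = ⟪K e, et⟫)
    (h2 : ⟪et, e⟫ = ⟪K e, e⟫)
    (horthD : aForm K (et - uD) uD = 0) :
    aForm K (et - uD) (et - uD) ≤ c ^ 2 * aForm K e e := by
  have hKsymm : ∀ u v : H, ⟪K u, v⟫ = ⟪K v, u⟫ := by
    intro u v; rw [hK u v, real_inner_comm]
  have hKcs : ∀ u v : H, ⟪K u, v⟫ ^ 2 ≤ ⟪K u, u⟫ * ⟪K v, v⟫ := by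
    apply bilin_cs
    · intro u v w; rw [map_add, inner_add_left]
    · intro t u v; rw [map_smul, real_inner_smul_left]
    · exact hKsymm
    · exact hKpos
  have haSymm : ∀ u v : H, aForm K u v = aForm K v u := by
    intro u v; unfold aForm; rw [real_inner_comm u v, hKsymm]
  have haNonneg : ∀ v : H, 0 ≤ aForm K v v := by
    intro v
    have hb := hKbd v
    have hs : (0:ℝ) ≤ ⟪v, v⟫ := real_inner_self_nonneg
    unfold aForm; nlinarith
  have haCS : ∀ u v : H, (aForm K u v) ^ 2 ≤ aForm K u u * aForm K v v := by
    apply bilin_cs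
    · intro u v w; simp only [aForm, map_add, inner_add_left]; ring
    · intro t u v
      simp only [aForm, map_smul, real_inner_smul_left]; ring
    · exact haSymm
    · exact haNonneg
  -- Step 1 : a(et - uD, et - uD) ≤ a(et, et)
  have hexp : aForm K (et - uD) (et - uD) =
      aForm K et et - aForm K et uD - aForm K uD et + aForm K uD uD := by
    simp only [aForm, map_sub, inner_sub_left, inner_sub_right]; ring
  have hexp2 : aForm K (et - uD) uD = aForm K et uD - aForm K uD uD := by
    simp only [aForm, map_sub, inner_sub_left]; ring
  have ho : aForm K et uD = aForm K uD uD := by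
    rw [hexp2] at horthD; linarith
  have hsy : aForm K uD et = aForm K et uD := haSymm uD et
  have hDnn : 0 ≤ aForm K uD uD := haNonneg uD
  have hF3 : aForm K (et - uD) (et - uD) ≤ aForm K et et := by
    rw [hexp, hsy, ho]; linarith
  -- Step 2 : a(et, et) ≤ c² a(e, e)
  have haee : aForm K e et = ⟪K e, e⟫ - ⟪et, et⟫ := by
    have hc : ⟪e, et⟫ = ⟪K e, e⟫ := by rw [real_inner_comm]; exact h2
    unfold aForm; rw [hc, ← h1]
  have ha2 : aForm K et et = ⟪et, et⟫ - ⟪K et, et⟫ := rfl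
  have hcs_a : (⟪K e, e⟫ - ⟪et, et⟫) ^ 2 ≤ aForm K e e * (⟪et, et⟫ - ⟪K et, et⟫) := by
    have := haCS e et
    rw [haee, ha2] at this
    exact this
  have hcsK : ⟪et, et⟫ ^ 2 ≤ ⟪K e, e⟫ * ⟪K et, et⟫ := by
    calc ⟪et, et⟫ ^ 2 = ⟪K e, et⟫ ^ 2 := by rw [h1]
      _ ≤ ⟪K e, e⟫ * ⟪K et, et⟫ := hKcs e et
  have hF4 : ⟪et, et⟫ - ⟪K et, et⟫ ≤ c ^ 2 * aForm K e e :=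
    dsa_core c ⟪K e, e⟫ ⟪et, et⟫ ⟪K et, et⟫ (aForm K e e) hc0 hc1
      (hKpos e) real_inner_self_nonneg (hKpos et) (hKbd et) hcsK hcs_a (haNonneg e)
      (ha2 ▸ haNonneg et)
  calc aForm K (et - uD) (et - uD) ≤ aForm K et et := hF3
    _ = ⟪et, et⟫ - ⟪K et, et⟫ := ha2
    _ ≤ c ^ 2 * aForm K e e := hF4

/-- convergence of the discrete DSA-preconditioned source iteration, with
contraction rate c independent of the discretization. -/
theorem stmt_8 {H : Type*} [NormedAddCommGroup H] [InnerProductSpace ℝ H] [CompleteSpace H]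
    (K : H →L[ℝ] H) (hK : ∀ u v : H, ⟪K u, v⟫ = ⟪u, K v⟫)
    (c : ℝ) (hc0 : 0 ≤ c) (hc1 : c < 1)
    (hKpos : ∀ v : H, 0 ≤ ⟪K v, v⟫)
    (hKbd : ∀ v : H, ⟪K v, v⟫ ≤ c * ⟪v, v⟫)
    (ℓ : H →L[ℝ] ℝ)
    (W₁ W : Submodule ℝ H) (hW₁W : W₁ ≤ W)
    (hW₁ : IsClosed (W₁ : Set H)) (hW : IsClosed (W : Set H))
    (uW : H) (huW : uW ∈ W) (huWeq : ∀ v ∈ W, aForm K uW v = ℓ v)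
    (uk : ℕ → H) (hukW : ∀ k : ℕ, uk k ∈ W)
    (hiter : ∀ k : ℕ, ∃ uhalf uD : H, uhalf ∈ W ∧ uD ∈ W₁ ∧
      (∀ v ∈ W, ⟪uhalf, v⟫ = ⟪K (uk k), v⟫ + ℓ v) ∧
      (∀ v ∈ W₁, aForm K uD v = ⟪K (uhalf - uk k), v⟫) ∧
      uk (k + 1) = uhalf + uD) :
    (∀ k : ℕ, aForm K (uW - uk (k + 1)) (uW - uk (k + 1)) ≤
      c ^ 2 * aForm K (uW - uk k) (uW - uk k)) ∧
    (∀ k : ℕ, aForm K (uW - uk k) (uW - uk k) ≤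
      c ^ (2 * k) * aForm K (uW - uk 0) (uW - uk 0)) := by
  have key : ∀ k : ℕ, aForm K (uW - uk (k + 1)) (uW - uk (k + 1)) ≤
      c ^ 2 * aForm K (uW - uk k) (uW - uk k) := by
    intro k
    obtain ⟨uhalf, uD, hhW, hDW1, hhalf, hDeq, hupd⟩ := hiter k
    have heW : uW - uk k ∈ W := W.sub_mem huW (hukW k)
    have hetW : uW - uhalf ∈ W := W.sub_mem huW hhW
    -- half-step error characterization
    have hF1 : ∀ v ∈ W, ⟪uW - uhalf, v⟫ = ⟪K (uW - uk k), v⟫ := by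
      intro v hv
      have h1 := hhalf v hv
      have h2 := huWeq v hv
      unfold aForm at h2
      rw [inner_sub_left, map_sub, inner_sub_left, h1]
      linarith
    -- Galerkin orthogonality of the corrected error against uD
    have horthD : aForm K ((uW - uhalf) - uD) uD = 0 := by
      have h1 := hDeq uD hDW1
      have h3 : aForm K (uW - uhalf) uD = ⟪K (uhalf - uk k), uD⟫ := by
        unfold aForm
        rw [hF1 uD (hW₁W hDW1)]
        simp only [map_sub, inner_sub_left]
        ring
      have h4 : aForm K ((uW - uhalf) - uD) uD
          = aForm K (uW - uhalf) uD - aForm K uD uD := by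
        simp only [aForm, map_sub, inner_sub_left]; ring
      rw [h4, h3, h1]
      ring
    have hstep := dsa_step K hK c hc0 hc1 hKpos hKbd (uW - uk k) (uW - uhalf) uD
      (hF1 (uW - uhalf) hetW) (hF1 (uW - uk k) heW) horthD
    have hek1 : uW - uk (k + 1) = (uW - uhalf) - uD := by rw [hupd]; abel
    rw [hek1]
    exact hstep
  refine ⟨key, ?_⟩
  intro k
  induction k with
  | zero => simp
  | succ n ih =>
      have h1 := key n
      have h2 : c ^ 2 * aForm K (uW - uk n) (uW - uk n) ≤
          c ^ 2 * (c ^ (2 * n) * aForm K (uW - uk 0) (uW - uk 0)) :=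
        mul_le_mul_of_nonneg_left ih (sq_nonneg c)
      have h3 : c ^ 2 * (c ^ (2 * n) * aForm K (uW - uk 0) (uW - uk 0)) =
          c ^ (2 * (n + 1)) * aForm K (uW - uk 0) (uW - uk 0) := by
        rw [show 2 * (n + 1) = 2 + 2 * n by ring, pow_add]; ring
      linarith
end

section
/- Let H be a real Hilbert space, T : H → H a bounded self-adjoint linear operator with 0 ≤ ⟪T v, v⟫ ≤ ⟪v, v⟫ for all v ∈ H, and K : H → H a bounded linear operator such that |⟪K u, v⟫| ≤ c · ⟪T u, u⟫^{1/2} · ⟪T v, v⟫^{1/2} for all u, v ∈ H, where c ≥ 0 is a constant. Then for every e ∈ H, every ε ∈ (0, 2], and e' := K e, one has (1 − ε/2) · ⟪T e', e'⟫ + (⟪e', e'⟫ − ⟪T e', e'⟫) ≤ (c²/(2ε)) · ⟪T e, e⟫. In particular, taking ε = 2: ⟪e', e'⟫ − ⟪T e', e'⟫ ≤ (c²/4) · ⟪T e, e⟫. -/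
open scoped RealInnerProductSpace

lemma stmt_10_aux {H : Type*} [NormedAddCommGroup H] [InnerProductSpace ℝ H]
    (T : H →L[ℝ] H) (hTpos : ∀ v : H, 0 ≤ ⟪T v, v⟫)
    (K : H →L[ℝ] H) (c : ℝ) (hc0 : 0 ≤ c)
    (hKbd : ∀ u v : H, |⟪K u, v⟫| ≤ c * Real.sqrt ⟪T u, u⟫ * Real.sqrt ⟪T v, v⟫)
    (e : H) (ε : ℝ) (hε0 : 0 < ε) (e' : H) (he' : e' = K e) :
    ⟪e', e'⟫ - ε / 2 * ⟪T e', e'⟫ ≤ c ^ 2 / (2 * ε) * ⟪T e, e⟫ := by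
  set a := Real.sqrt ⟪T e, e⟫ with ha
  set b := Real.sqrt ⟪T e', e'⟫ with hb
  have ha0 : 0 ≤ a := Real.sqrt_nonneg _
  have hb0 : 0 ≤ b := Real.sqrt_nonneg _
  have ha2 : a ^ 2 = ⟪T e, e⟫ := Real.sq_sqrt (hTpos e)
  have hb2 : b ^ 2 = ⟪T e', e'⟫ := Real.sq_sqrt (hTpos e')
  have h1 : ⟪e', e'⟫ ≤ c * a * b := by
    have := hKbd e e'
    calc ⟪e', e'⟫ = ⟪K e, e'⟫ := by rw [he']
    _ ≤ |⟪K e, e'⟫| := le_abs_self _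
    _ ≤ c * a * b := this
  have h2 : c * a * b ≤ c ^ 2 / (2 * ε) * a ^ 2 + ε / 2 * b ^ 2 := by
    have hsq : 0 ≤ (c * a - ε * b) ^ 2 := sq_nonneg _
    rw [div_mul_eq_mul_div, div_add' _ _ _ (by positivity), le_div_iff₀ (by positivity)]
    nlinarith [sq_nonneg (c * a - ε * b)]
  rw [← ha2, ← hb2]; linarith

/-- abstract smoothing estimate for the unpreconditioned source iteration
(Remark 6). -/
theorem stmt_10 {H : Type*} [NormedAddCommGroup H] [InnerProductSpace ℝ H] [CompleteSpace H]
    (T : H →L[ℝ] H) (hT : ∀ u v : H, ⟪T u, v⟫ = ⟪u, T v⟫)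
    (hTpos : ∀ v : H, 0 ≤ ⟪T v, v⟫) (hTbd : ∀ v : H, ⟪T v, v⟫ ≤ ⟪v, v⟫)
    (K : H →L[ℝ] H) (c : ℝ) (hc0 : 0 ≤ c)
    (hKbd : ∀ u v : H, |⟪K u, v⟫| ≤ c * Real.sqrt ⟪T u, u⟫ * Real.sqrt ⟪T v, v⟫)
    (e : H) (ε : ℝ) (hε0 : 0 < ε) (hε2 : ε ≤ 2) (e' : H) (he' : e' = K e) :
    (1 - ε / 2) * ⟪T e', e'⟫ + (⟪e', e'⟫ - ⟪T e', e'⟫) ≤ c ^ 2 / (2 * ε) * ⟪T e, e⟫ ∧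
    ⟪e', e'⟫ - ⟪T e', e'⟫ ≤ c ^ 2 / 4 * ⟪T e, e⟫ := by
  constructor
  · have := stmt_10_aux T hTpos K c hc0 hKbd e ε hε0 e' he'
    linarith
  · have := stmt_10_aux T hTpos K c hc0 hKbd e 2 (by norm_num) e' he'
    have h4 : c ^ 2 / (2 * 2) = c ^ 2 / 4 := by norm_num
    linarith [this, h4 ▸ this]
end

section
/- Let Z > 0, let μ ∈ ℝ with 0 < |μ| ≤ 1, and let f : ℝ → ℝ be continuously differentiable on [0, Z]. Then |μ| · f(0)² ≤ (2/(1 − e^{−Z})) · ( ∫₀^Z f(z)² dz + ∫₀^Z μ² f'(z)² dz ). -/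
/-!
Writing `f a ^ 2 = f z ^ 2 - ∫ₐᶻ 2 f f'` and bounding `|μ| · |2 f f'| ≤ f ^ 2 + μ ^ 2 f' ^ 2`
gives `|μ| f(a)² ≤ f(z)² + ‖f‖² + ‖μ f'‖²` for every `z ∈ [a, b]`. Averaging over `z` yields the
constant `1 + 1 / (b - a)`, which is at most `2 / (1 - e^{-Z})` for `b - a = Z` since
`1 - e^{-Z} ≤ min 1 Z`.
-/

open intervalIntegral MeasureTheory Set

theorem le_add_integral_abs_of_hasDerivAt {g g' : ℝ → ℝ} {a b z : ℝ}
    (hg : ∀ t ∈ Icc a b, HasDerivAt g (g' t) t) (hg' : IntervalIntegrable g' volume a b)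
    (hz : z ∈ Icc a b) :
    g a ≤ g z + ∫ t in a..b, |g' t| := by
  have hab : a ≤ b := hz.1.trans hz.2
  have hsub : uIcc a z ⊆ uIcc a b :=
    uIcc_subset_uIcc left_mem_uIcc (by rwa [uIcc_of_le hab])
  have hftc : ∫ t in a..z, g' t = g z - g a :=
    integral_eq_sub_of_hasDerivAt (fun t ht => hg t (by rw [← uIcc_of_le hab]; exact hsub ht))
      (hg'.mono_set hsub)
  calc g a = g z - ∫ t in a..z, g' t := by rw [hftc]; ring
    _ ≤ g z + |∫ t in a..z, g' t| := by linarith [neg_abs_le (∫ t in a..z, g' t)]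
    _ ≤ g z + ∫ t in a..z, |g' t| := by gcongr; exact abs_integral_le_integral_abs hz.1
    _ ≤ g z + ∫ t in a..b, |g' t| := by
      gcongr
      exact integral_mono_interval le_rfl hz.1 hz.2
        (Filter.Eventually.of_forall fun t => abs_nonneg _) hg'.abs

theorem abs_mul_abs_two_mul_le (μ x y : ℝ) : |μ| * |2 * x * y| ≤ x ^ 2 + μ ^ 2 * y ^ 2 := by
  have h := two_mul_le_add_sq |x| (|μ| * |y|)
  rw [mul_pow, sq_abs, sq_abs, sq_abs] at h
  rw [abs_mul, abs_mul, abs_two]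
  linarith

section Trace

variable {a b μ : ℝ} {f f' : ℝ → ℝ}

theorem abs_mul_sq_le_sq_add_integral (hμ : |μ| ≤ 1)
    (hf : ∀ z ∈ Icc a b, HasDerivAt f (f' z) z) (hf' : ContinuousOn f' (Icc a b))
    {z : ℝ} (hz : z ∈ Icc a b) :
    |μ| * f a ^ 2 ≤
      f z ^ 2 + ((∫ t in a..b, f t ^ 2) + ∫ t in a..b, μ ^ 2 * f' t ^ 2) := by
  have hab : a ≤ b := hz.1.trans hz.2
  have hfc : ContinuousOn f (Icc a b) := fun t ht => (hf t ht).continuousAt.continuousWithinAt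
  have hsq : ∀ t ∈ Icc a b, HasDerivAt (fun s => f s ^ 2) (2 * f t * f' t) t := fun t ht => by
    simpa using (hf t ht).fun_pow 2
  have hsq' : IntervalIntegrable (fun t => 2 * f t * f' t) volume a b :=
    ((continuousOn_const.mul hfc).mul hf').intervalIntegrable_of_Icc hab
  have hA : IntervalIntegrable (fun t => f t ^ 2) volume a b :=
    (hfc.pow 2).intervalIntegrable_of_Icc hab
  have hB : IntervalIntegrable (fun t => μ ^ 2 * f' t ^ 2) volume a b :=
    (continuousOn_const.mul (hf'.pow 2)).intervalIntegrable_of_Icc hab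
  have hAB : |μ| * ∫ t in a..b, |2 * f t * f' t| ≤
      (∫ t in a..b, f t ^ 2) + ∫ t in a..b, μ ^ 2 * f' t ^ 2 := by
    rw [← intervalIntegral.integral_const_mul, ← integral_add hA hB]
    exact integral_mono_on hab (hsq'.abs.const_mul _) (hA.add hB)
      fun t _ => abs_mul_abs_two_mul_le μ (f t) (f' t)
  have hpt := le_add_integral_abs_of_hasDerivAt hsq hsq' hz
  have hμf : |μ| * f z ^ 2 ≤ f z ^ 2 := mul_le_of_le_one_left (sq_nonneg _) hμ
  nlinarith [mul_le_mul_of_nonneg_left hpt (abs_nonneg μ)]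

theorem abs_mul_sq_le_one_add_inv_mul (hab : a < b) (hμ : |μ| ≤ 1)
    (hf : ∀ z ∈ Icc a b, HasDerivAt f (f' z) z) (hf' : ContinuousOn f' (Icc a b)) :
    |μ| * f a ^ 2 ≤
      (1 + 1 / (b - a)) * ((∫ t in a..b, f t ^ 2) + ∫ t in a..b, μ ^ 2 * f' t ^ 2) := by
  set A := ∫ t in a..b, f t ^ 2
  set B := ∫ t in a..b, μ ^ 2 * f' t ^ 2
  have hfc : ContinuousOn f (Icc a b) := fun t ht => (hf t ht).continuousAt.continuousWithinAt
  have hB : 0 ≤ B := integral_nonneg hab.le fun t _ => by positivity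
  have hA : IntervalIntegrable (fun t => f t ^ 2) volume a b :=
    (hfc.pow 2).intervalIntegrable_of_Icc hab.le
  have havg : (b - a) * (|μ| * f a ^ 2) ≤ A + (b - a) * (A + B) := by
    have h := integral_mono_on hab.le intervalIntegrable_const
      (hA.add intervalIntegrable_const)
      fun z hz => abs_mul_sq_le_sq_add_integral hμ hf hf' hz
    rwa [intervalIntegral.integral_const, integral_add hA intervalIntegrable_const,
      intervalIntegral.integral_const, smul_eq_mul, smul_eq_mul] at h
  have hba : 0 < b - a := sub_pos.mpr hab
  have hAB : A / (b - a) ≤ (A + B) / (b - a) := by gcongr; linarith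
  have hdiv : |μ| * f a ^ 2 ≤ A / (b - a) + (A + B) := by
    rw [div_add' _ _ _ hba.ne', le_div_iff₀ hba]
    linarith
  rw [one_add_mul, one_div_mul_eq_div]
  linarith

end Trace

theorem one_add_inv_le_two_div_one_sub_exp_neg {Z : ℝ} (hZ : 0 < Z) :
    1 + 1 / Z ≤ 2 / (1 - Real.exp (-Z)) := by
  have hd : 0 < 1 - Real.exp (-Z) := by linarith [Real.exp_lt_one_iff.mpr (neg_neg_of_pos hZ)]
  have hle : 1 - Real.exp (-Z) ≤ Z := by linarith [Real.add_one_le_exp (-Z)]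
  have hle1 : 1 - Real.exp (-Z) ≤ 1 := by linarith [Real.exp_pos (-Z)]
  rw [le_div_iff₀ hd, add_mul, one_div_mul_eq_div]
  linarith [(div_le_one hZ).mpr hle]

theorem stmt_11_general (Z : ℝ) (hZ : 0 < Z) (μ : ℝ) (hμ1 : |μ| ≤ 1)
    (f f' : ℝ → ℝ) (hf : ∀ z ∈ Set.Icc 0 Z, HasDerivAt f (f' z) z)
    (hf' : ContinuousOn f' (Set.Icc 0 Z)) :
    |μ| * f 0 ^ 2 ≤ 2 / (1 - Real.exp (-Z)) *
      ((∫ z in (0 : ℝ)..Z, f z ^ 2) + ∫ z in (0 : ℝ)..Z, μ ^ 2 * f' z ^ 2) := by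
  have hAB : 0 ≤ (∫ z in (0 : ℝ)..Z, f z ^ 2) + ∫ z in (0 : ℝ)..Z, μ ^ 2 * f' z ^ 2 :=
    add_nonneg (integral_nonneg hZ.le fun _ _ => by positivity)
      (integral_nonneg hZ.le fun _ _ => by positivity)
  have h := abs_mul_sq_le_one_add_inv_mul hZ hμ1 hf hf'
  rw [sub_zero] at h
  exact h.trans (mul_le_mul_of_nonneg_right (one_add_inv_le_two_div_one_sub_exp_neg hZ) hAB)

/-- single-direction trace inequality (Lemma 1 for a fixed direction μ). -/
theorem stmt_11 (Z : ℝ) (hZ : 0 < Z) (μ : ℝ) (hμ0 : 0 < |μ|) (hμ1 : |μ| ≤ 1)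
    (f f' : ℝ → ℝ) (hf : ∀ z ∈ Set.Icc 0 Z, HasDerivAt f (f' z) z)
    (hf' : ContinuousOn f' (Set.Icc 0 Z)) :
    |μ| * f 0 ^ 2 ≤ 2 / (1 - Real.exp (-Z)) *
      ((∫ z in (0 : ℝ)..Z, f z ^ 2) + ∫ z in (0 : ℝ)..Z, μ ^ 2 * f' z ^ 2) :=
  stmt_11_general Z hZ μ hμ1 f f' hf hf'
end

section
/- Let Z > 0, let σ_s, σ_t : (0,Z) → ℝ be measurable with σ_t essentially bounded, and suppose there is a constant c ≥ 0 such that 0 ≤ σ_s(z) ≤ c · σ_t(z) for almost every z ∈ (0,Z). For v square-integrable on (0,Z)×(−1,1), define the angular average (𝒫v)(z) = (1/2)∫_{−1}^{1} v(z,μ') dμ'. Then 0 ≤ ∫₀^Z ∫_{−1}^{1} σ_s(z) (𝒫v)(z) · v(z,μ) dμ dz ≤ c · ∫₀^Z ∫_{−1}^{1} σ_t(z) v(z,μ)² dμ dz. -/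
/-!
On each slice `z`, Jensen's inequality for `x ↦ x²` (Cauchy–Schwarz) gives
`0 ≤ (𝒫v)(z) ∫ v(z, μ) dμ ≤ ∫ v(z, μ)² dμ`. Multiplying by `0 ≤ σ_s ≤ c σ_t` and integrating in `z`
yields both bounds; the upper one needs only the integrability of `σ_t ∫ v² dμ`, which holds
because `σ_t` is bounded and `v ∈ L²`.
-/

open MeasureTheory Set

section

variable {α β : Type*} [MeasurableSpace α] [MeasurableSpace β] {μ : Measure α} {ν : Measure β}

theorem average_mul_integral_nonneg [IsFiniteMeasure μ] (f : α → ℝ) :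
    0 ≤ (⨍ x, f x ∂μ) * ∫ x, f x ∂μ := by
  rw [← measure_smul_average, smul_eq_mul, mul_left_comm]
  exact mul_nonneg measureReal_nonneg (mul_self_nonneg _)

theorem average_mul_integral_le_integral_sq [IsFiniteMeasure μ] {f : α → ℝ}
    (hf : Integrable f μ) (hf2 : Integrable (fun x => f x ^ 2) μ) :
    (⨍ x, f x ∂μ) * ∫ x, f x ∂μ ≤ ∫ x, f x ^ 2 ∂μ := by
  rcases eq_or_ne μ 0 with rfl | hμ
  · simp
  have : NeZero μ := ⟨hμ⟩
  have jensen : (⨍ x, f x ∂μ) ^ 2 ≤ ⨍ x, f x ^ 2 ∂μ :=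
    even_two.convexOn_pow.map_average_le (continuous_pow 2).continuousOn isClosed_univ
      (.of_forall fun _ => mem_univ _) hf hf2
  rw [← measure_smul_average, ← measure_smul_average μ (fun x => f x ^ 2), smul_eq_mul,
    smul_eq_mul, mul_left_comm, ← sq]
  exact mul_le_mul_of_nonneg_left jensen measureReal_nonneg

theorem ae_average_mul_integral_le_integral_sq [SFinite μ] [IsFiniteMeasure ν]
    {v : α → β → ℝ} (hv : MemLp (Function.uncurry v) 2 (μ.prod ν)) :
    ∀ᵐ x ∂μ, (⨍ y, v x y ∂ν) * ∫ y, v x y ∂ν ≤ ∫ y, v x y ^ 2 ∂ν := by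
  filter_upwards [hv.aestronglyMeasurable.prodMk_left, hv.integrable_sq.prod_right_ae]
    with x hmeas hsq
  have hL2 : MemLp (v x) 2 ν := (memLp_two_iff_integrable_sq hmeas).2 hsq
  exact average_mul_integral_le_integral_sq (hL2.integrable one_le_two) hsq

/-- The form `k(v, v) = (σ 𝒫 v, v)`, where `𝒫` averages over the angular (second) variable. -/
noncomputable def scatteringForm (μ : Measure α) (ν : Measure β) (σ : α → ℝ) (v : α → β → ℝ) :
    ℝ :=
  ∫ x, ∫ y, σ x * (⨍ y', v x y' ∂ν) * v x y ∂ν ∂μ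

theorem scatteringForm_eq (σ : α → ℝ) (v : α → β → ℝ) :
    scatteringForm μ ν σ v = ∫ x, σ x * ((⨍ y, v x y ∂ν) * ∫ y, v x y ∂ν) ∂μ := by
  simp only [scatteringForm, integral_const_mul, mul_assoc]

theorem scatteringForm_nonneg [IsFiniteMeasure ν] {σ : α → ℝ} (hσ : 0 ≤ᵐ[μ] σ)
    (v : α → β → ℝ) : 0 ≤ scatteringForm μ ν σ v := by
  rw [scatteringForm_eq]
  refine integral_nonneg_of_ae ?_
  filter_upwards [hσ] with x hx
  exact mul_nonneg hx (average_mul_integral_nonneg _)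

theorem scatteringForm_le [SFinite μ] [IsFiniteMeasure ν] {σs σt : α → ℝ} {c : ℝ}
    (hσt_meas : AEStronglyMeasurable σt μ) (hσt_bdd : ∃ M : ℝ, ∀ᵐ x ∂μ, |σt x| ≤ M)
    (hbd : ∀ᵐ x ∂μ, 0 ≤ σs x ∧ σs x ≤ c * σt x) {v : α → β → ℝ}
    (hv : MemLp (Function.uncurry v) 2 (μ.prod ν)) :
    scatteringForm μ ν σs v ≤ c * ∫ x, ∫ y, σt x * v x y ^ 2 ∂ν ∂μ := by
  obtain ⟨M, hM⟩ := hσt_bdd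
  have hint : Integrable (fun x => σt x * ∫ y, v x y ^ 2 ∂ν) μ :=
    hv.integrable_sq.integral_prod_left.bdd_mul hσt_meas (by simpa only [Real.norm_eq_abs])
  rw [scatteringForm_eq]
  simp only [integral_const_mul]
  rw [← integral_const_mul]
  refine integral_mono_of_nonneg ?_ (hint.const_mul c) ?_
  · filter_upwards [hbd] with x hx
    exact mul_nonneg hx.1 (average_mul_integral_nonneg _)
  · filter_upwards [hbd, ae_average_mul_integral_le_integral_sq hv] with x ⟨hs0, hsc⟩ hcs
    have hJ : 0 ≤ ∫ y, v x y ^ 2 ∂ν := (average_mul_integral_nonneg _).trans hcs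
    calc σs x * ((⨍ y, v x y ∂ν) * ∫ y, v x y ∂ν)
        ≤ σs x * ∫ y, v x y ^ 2 ∂ν := mul_le_mul_of_nonneg_left hcs hs0
      _ ≤ c * (σt x * ∫ y, v x y ^ 2 ∂ν) := by
        rw [← mul_assoc]; exact mul_le_mul_of_nonneg_right hsc hJ

end

theorem stmt_13_general (Z : ℝ) (σs σt : ℝ → ℝ)
    (hσt_meas : Measurable σt)
    (hσt_bdd : ∃ M : ℝ, ∀ᵐ z ∂volume.restrict (Set.Ioo (0 : ℝ) Z), |σt z| ≤ M)
    (c : ℝ)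
    (hbd : ∀ᵐ z ∂volume.restrict (Set.Ioo (0 : ℝ) Z), 0 ≤ σs z ∧ σs z ≤ c * σt z)
    (v : ℝ → ℝ → ℝ)
    (hv : MemLp (fun p : ℝ × ℝ => v p.1 p.2) 2
      ((volume.restrict (Set.Ioo (0 : ℝ) Z)).prod (volume.restrict (Set.Ioo (-1 : ℝ) 1)))) :
    0 ≤ (∫ z in Set.Ioo (0 : ℝ) Z, ∫ m in Set.Ioo (-1 : ℝ) 1,
        σs z * ((1 / 2) * ∫ m' in Set.Ioo (-1 : ℝ) 1, v z m') * v z m) ∧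
    (∫ z in Set.Ioo (0 : ℝ) Z, ∫ m in Set.Ioo (-1 : ℝ) 1,
        σs z * ((1 / 2) * ∫ m' in Set.Ioo (-1 : ℝ) 1, v z m') * v z m) ≤
      c * ∫ z in Set.Ioo (0 : ℝ) Z, ∫ m in Set.Ioo (-1 : ℝ) 1, σt z * v z m ^ 2 := by
  have hP (z : ℝ) :
      (1 / 2) * ∫ m' in Ioo (-1 : ℝ) 1, v z m' = ⨍ m' in Ioo (-1 : ℝ) 1, v z m' := by
    rw [setAverage_eq, Real.volume_real_Ioo, smul_eq_mul]
    norm_num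
  simp only [hP]
  exact ⟨scatteringForm_nonneg (hbd.mono fun _ h => h.1) v,
    scatteringForm_le hσt_meas.aestronglyMeasurable hσt_bdd hbd hv⟩

/-- positivity and boundedness of the scattering form
`k(v,v) = (σ_s 𝒫 v, v)`: `0 ≤ k(v,v) ≤ c (σ_t v, v)`. -/
theorem stmt_13 (Z : ℝ) (hZ : 0 < Z) (σs σt : ℝ → ℝ)
    (hσs_meas : Measurable σs) (hσt_meas : Measurable σt)
    (hσt_bdd : ∃ M : ℝ, ∀ᵐ z ∂volume.restrict (Set.Ioo (0 : ℝ) Z), |σt z| ≤ M)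
    (c : ℝ) (hc0 : 0 ≤ c)
    (hbd : ∀ᵐ z ∂volume.restrict (Set.Ioo (0 : ℝ) Z), 0 ≤ σs z ∧ σs z ≤ c * σt z)
    (v : ℝ → ℝ → ℝ)
    (hv : MemLp (fun p : ℝ × ℝ => v p.1 p.2) 2
      ((volume.restrict (Set.Ioo (0 : ℝ) Z)).prod (volume.restrict (Set.Ioo (-1 : ℝ) 1)))) :
    0 ≤ (∫ z in Set.Ioo (0 : ℝ) Z, ∫ m in Set.Ioo (-1 : ℝ) 1,
        σs z * ((1 / 2) * ∫ m' in Set.Ioo (-1 : ℝ) 1, v z m') * v z m) ∧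
    (∫ z in Set.Ioo (0 : ℝ) Z, ∫ m in Set.Ioo (-1 : ℝ) 1,
        σs z * ((1 / 2) * ∫ m' in Set.Ioo (-1 : ℝ) 1, v z m') * v z m) ≤
      c * ∫ z in Set.Ioo (0 : ℝ) Z, ∫ m in Set.Ioo (-1 : ℝ) 1, σt z * v z m ^ 2 :=
  stmt_13_general Z σs σt hσt_meas hσt_bdd c hbd v hv
end
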